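/- Let (δ_t^x) be the periodic nearest-neighbors branching random walk on ℤ² with offspring distribution 𝒫 = (P_i)_{i≥0}, and let q_n(x) = 1 − p_n(x). For every n ≥ 2, q_n(1,0) ≤ Σ_{i≥0} q_n(0,0)^i P_i. -/

import Mathlib

open scoped ENNReal
open MeasureTheory Filter

namespace BRW

/-- Sites of the lattice `ℤ^d`. -/
abbrev Site (d : ℕ) := Fin d → ℤ

/-- A configuration of particles: finitely many particles, `η z` particles at site `z`. -/
abbrev Config (d : ℕ) := Site d →₀ ℕ

noncomputable instance (d : ℕ) : MeasurableSpace (Config d) := ⊤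
noncomputable instance (d : ℕ) : MeasurableSpace (List (Config d)) := ⊤

instance (d : ℕ) : Inhabited (Config d) := ⟨0⟩

/-- Uniform distribution on a finite set (junk value if the set is empty). -/
noncomputable def unifOn {α : Type*} [Inhabited α] (s : Finset α) : PMF α :=
  if h : s.Nonempty then PMF.uniformOfFinset s h else PMF.pure default

/-- Bernoulli distribution (junk value if `p > 1`). -/
noncomputable def bern (p : ℝ≥0∞) : PMF Bool :=
  if h : p ≤ 1 then PMF.bernoulli p.toNNReal (by simpa using ENNReal.toNNReal_mono ENNReal.one_ne_top h) else PMF.pure true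

/-- Convolution of two `PMF`s on an additive monoid: the law of a sum of independent samples. -/
noncomputable def conv {α : Type*} [AddCommMonoid α] (p q : PMF α) : PMF α :=
  p.bind fun a => q.bind fun b => PMF.pure (a + b)

instance {α : Type*} [AddCommMonoid α] : Std.Commutative (conv (α := α)) where
  comm p q := by
    unfold conv
    rw [PMF.bind_comm]
    refine congrArg _ (funext fun b => congrArg _ (funext fun a => ?_))
    rw [add_comm]

instance {α : Type*} [AddCommMonoid α] : Std.Associative (conv (α := α)) where
  assoc p q r := by
    simp only [conv, PMF.bind_bind, PMF.pure_bind, add_assoc]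

/-- `n`-fold convolution: the law of a sum of `n` independent samples of `p`. -/
noncomputable def iterConv {α : Type*} [AddCommMonoid α] (p : PMF α) : ℕ → PMF α
  | 0 => PMF.pure 0
  | n + 1 => conv p (iterConv p n)

variable {d : ℕ}

/-- The nearest neighbors (`L¹`-distance exactly one) of a site. -/
def nbrs (z : Site d) : Finset (Site d) :=
  (Finset.univ ×ˢ ({1, -1} : Finset ℤ)).image fun p => Function.update z p.1 (z p.1 + p.2)

/-- Law of the configuration of children of one particle at `z`: a random number of offspring
distributed according to `P`, each placed independently and uniformly at random on `nbr z`. -/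
noncomputable def childLaw (P : PMF ℕ) (nbr : Site d → Finset (Site d)) (z : Site d) :
    PMF (Config d) :=
  P.bind fun n => iterConv ((unifOn (nbr z)).map fun w => Finsupp.single w 1) n

/-- Children law of the aperiodic walk: offspring are placed uniformly on the `2d+1` sites at
`L¹`-distance at most `1` from the parent. -/
noncomputable def aperiodicChild (P : PMF ℕ) (z : Site d) : PMF (Config d) :=
  childLaw P (fun w => insert w (nbrs w)) z

/-- Children law of the periodic walk: offspring are placed uniformly on the `2d` nearest
neighbors of the parent. -/
noncomputable def periodicChild (P : PMF ℕ) (z : Site d) : PMF (Config d) :=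
  childLaw P nbrs z

/-- Children law of the `π`-survival periodic walk: offspring placed uniformly on the nearest
neighbors, and in addition the particle itself survives with probability `π`, independently. -/
noncomputable def survChild (P : PMF ℕ) (π : ℝ≥0∞) (z : Site d) : PMF (Config d) :=
  conv (periodicChild P z) ((bern π).map fun b => if b then Finsupp.single z 1 else 0)

/-- One-step transition of a branching random walk with given children law: every particle
produces, independently of all other particles, a random children configuration. -/
noncomputable def stepOf (child : Site d → PMF (Config d)) (η : Config d) : PMF (Config d) :=
  Finset.fold conv (PMF.pure 0) (fun z => iterConv (child z) (η z)) η.support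

/-- One-step transition of the aperiodic nearest-neighbors branching random walk. -/
noncomputable def aperiodicStep (P : PMF ℕ) : Config d → PMF (Config d) :=
  stepOf (aperiodicChild P)

/-- One-step transition of the periodic nearest-neighbors branching random walk. -/
noncomputable def periodicStep (P : PMF ℕ) : Config d → PMF (Config d) :=
  stepOf (periodicChild P)

/-- One-step transition of the `π`-survival periodic nearest-neighbors branching random walk. -/
noncomputable def survStep (P : PMF ℕ) (π : ℝ≥0∞) : Config d → PMF (Config d) :=
  stepOf (survChild P π)

/-- The law of the configuration at time `t` of the Markov chain with one-step transition `step`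
started from configuration `init`. -/
noncomputable def timeLaw (step : Config d → PMF (Config d)) (init : Config d) :
    ℕ → PMF (Config d)
  | 0 => PMF.pure init
  | t + 1 => (timeLaw step init t).bind step

/-- The law of the trajectory up to time `t`, recorded as the list `[η_t, η_{t-1}, ..., η_0]`. -/
noncomputable def pathLaw (step : Config d → PMF (Config d)) (init : Config d) :
    ℕ → PMF (List (Config d))
  | 0 => PMF.pure [init]
  | t + 1 => (pathLaw step init t).bind fun l => (step l.headI).map fun c => c :: l

/-- `z ∈ ∂Λ_n`, the boundary of the hypercube `Λ_n = {z : ‖z‖_∞ ≤ n}`. -/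
def onBdry (n : ℕ) (z : Site d) : Prop :=
  (∀ i, |z i| ≤ (n : ℤ)) ∧ ∃ i, |z i| = (n : ℤ)

/-- `z ∈ Λ̊_n`, the interior of the hypercube `Λ_n`. -/
def inInterior (n : ℕ) (z : Site d) : Prop :=
  ∀ i, |z i| < (n : ℤ)

/-- The configuration `η` has no particle on `∂Λ_n`. -/
def avoids (n : ℕ) (η : Config d) : Prop :=
  ∀ z : Site d, onBdry n z → η z = 0

/-- `ℙ(τ_n > t)`: the probability that the branching random walk with one-step transition `step`
started from `init` puts no particle on `∂Λ_n` at any time `0, 1, ..., t`. -/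
noncomputable def survProb (step : Config d → PMF (Config d)) (init : Config d) (n t : ℕ) :
    ℝ≥0∞ :=
  (pathLaw step init t).toMeasure {l | ∀ c ∈ l, avoids n c}

/-- `p_n = ℙ(τ_n < ∞)`: the probability that some particle ever reaches `∂Λ_n`. -/
noncomputable def hitProb (step : Config d → PMF (Config d)) (init : Config d) (n : ℕ) : ℝ≥0∞ :=
  1 - ⨅ t : ℕ, survProb step init n t

/-- `ℙ(X(z) > k)` when the configuration `X` is distributed according to `p`. -/
noncomputable def tailProb (p : PMF (Config d)) (z : Site d) (k : ℕ) : ℝ≥0∞ :=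
  p.toMeasure {η | k < η z}

/-- The hitting time of `∂Λ_n` by a trajectory of configurations, valued in `ℕ ∪ {∞}`. -/
noncomputable def hitTime (n : ℕ) (f : ℕ → Config d) : ℕ∞ :=
  sInf ((fun t : ℕ => (t : ℕ∞)) '' {t | ¬ avoids n (f t)})

/-- The process `X` on the probability space `(Ω, Pr)` is a realization of (i.e., has the law of)
the branching random walk with one-step transition `step` started from `init`: for every `t`, the
trajectory up to time `t` has law `pathLaw step init t`. -/
def HasPathLaw {Ω : Type*} [MeasurableSpace Ω] (Pr : Measure Ω)
    (step : Config d → PMF (Config d)) (init : Config d) (X : ℕ → Ω → Config d) : Prop :=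
  ∀ t : ℕ, Measure.map (fun ω => (List.range (t + 1)).map fun s => X (t - s) ω) Pr
    = (pathLaw step init t).toMeasure

end BRW

/-!
Let `Q_t(x)` be the probability that the walk started from one particle at `x` keeps away from
`∂Λ_n` up to time `t`. The offspring of the first particle start independent copies of the walk,
so off the boundary `Q_{t+1}(x) = G(mean of Q_t over the neighbours of x)`, where `G` is the
generating function of `𝒫`. The reflections of `ℤ²` across the lines `x₀ = 1`, `x₀ + x₁ = 1` and
`x₀ - x₁ = 1` send the origin to the neighbours `(2,0)`, `(1,1)`, `(1,-1)` of `(1,0)`; by induction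
on `t`, a reflection never increases `Q_t` at a point of the half-plane containing the centre
whose image stays in `Λ_n`. Hence `Q_{t+1}(1,0) ≤ G(Q_t(0,0))`, and `t → ∞` gives the claim since
`G` is continuous from above on `[0,1]`.
-/

namespace BRW

section ConvolutionMonoid

variable {α : Type*} [AddCommMonoid α]

noncomputable abbrev convCommMonoid : CommMonoid (PMF α) where
  mul := conv
  one := PMF.pure 0
  mul_assoc := Std.Associative.assoc (op := conv)
  mul_comm := Std.Commutative.comm (op := conv)
  one_mul p := show conv (PMF.pure 0) p = p by simp [conv]
  mul_one p := show conv p (PMF.pure 0) = p by simp [conv]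

attribute [local instance] convCommMonoid

theorem iterConv_eq_pow (p : PMF α) : ∀ m, iterConv p m = p ^ m
  | 0 => (pow_zero p).symm
  | m + 1 => by rw [pow_succ', iterConv, iterConv_eq_pow p m]; rfl

variable {d : ℕ} (child : Site d → PMF (Config d))

theorem stepOf_eq_prod (η : Config d) : stepOf child η = η.prod fun z m => child z ^ m := by
  rw [stepOf, Finsupp.prod, Finset.prod_eq_fold]
  exact Finset.fold_congr fun z _ => iterConv_eq_pow _ _

theorem stepOf_add (η₁ η₂ : Config d) :
    stepOf child (η₁ + η₂) = conv (stepOf child η₁) (stepOf child η₂) := by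
  simp only [stepOf_eq_prod]
  exact Finsupp.prod_add_index' (fun _ => pow_zero _) fun _ _ _ => pow_add _ _ _

theorem stepOf_single (y : Site d) : stepOf child (Finsupp.single y 1) = child y := by
  rw [stepOf_eq_prod, Finsupp.prod_single_index] <;> simp

theorem stepOf_zero : stepOf child 0 = PMF.pure 0 := by
  simp [stepOf]

end ConvolutionMonoid

section PMF

variable {α β : Type*}

theorem bind_congr_of_support {p : PMF α} {f g : α → PMF β}
    (h : ∀ a ∈ p.support, f a = g a) : p.bind f = p.bind g := by
  ext b
  refine tsum_congr fun a => ?_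
  by_cases ha : a ∈ p.support
  · rw [h a ha]
  · rw [(PMF.apply_eq_zero_iff p a).2 ha, zero_mul, zero_mul]

noncomputable def expect (p : PMF α) (F : α → ℝ≥0∞) : ℝ≥0∞ := ∑' a, p a * F a

theorem expect_pure (a : α) (F : α → ℝ≥0∞) : expect (PMF.pure a) F = F a := by
  rw [expect, tsum_eq_single a fun b hb => by simp [PMF.pure_apply, hb]]
  simp

theorem expect_bind (p : PMF α) (f : α → PMF β) (F : β → ℝ≥0∞) :
    expect (p.bind f) F = expect p fun a => expect (f a) F := by
  simp only [expect, PMF.bind_apply, ← ENNReal.tsum_mul_right, ← ENNReal.tsum_mul_left, mul_assoc]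
  exact ENNReal.tsum_comm

theorem expect_map (p : PMF α) (f : α → β) (F : β → ℝ≥0∞) :
    expect (p.map f) F = expect p (F ∘ f) := by
  simp only [← PMF.bind_pure_comp, expect_bind, Function.comp_apply, expect_pure]
  rfl

theorem expect_const_mul (p : PMF α) (c : ℝ≥0∞) (F : α → ℝ≥0∞) :
    expect p (fun a => c * F a) = c * expect p F := by
  simp only [expect, ← ENNReal.tsum_mul_left, mul_left_comm]

theorem expect_mul_const (p : PMF α) (c : ℝ≥0∞) (F : α → ℝ≥0∞) :
    expect p (fun a => F a * c) = expect p F * c := by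
  simp only [expect, ← ENNReal.tsum_mul_right, mul_assoc]

theorem expect_mono (p : PMF α) {F G : α → ℝ≥0∞} (h : ∀ a, F a ≤ G a) :
    expect p F ≤ expect p G :=
  ENNReal.tsum_le_tsum fun a => by gcongr; exact h a

theorem expect_le_one (p : PMF α) {F : α → ℝ≥0∞} (h : ∀ a, F a ≤ 1) : expect p F ≤ 1 :=
  (expect_mono p h).trans_eq (by simp [expect, PMF.tsum_coe])

theorem expect_unifOn [Inhabited α] {s : Finset α} (hs : s.Nonempty) (F : α → ℝ≥0∞) :
    expect (unifOn s) F = (s.card : ℝ≥0∞)⁻¹ * ∑ a ∈ s, F a := by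
  rw [unifOn, dif_pos hs, expect, Finset.mul_sum,
    tsum_eq_sum fun a ha => by rw [PMF.uniformOfFinset_apply, if_neg ha, zero_mul]]
  exact Finset.sum_congr rfl fun a ha => by rw [PMF.uniformOfFinset_apply, if_pos ha]

variable [AddCommMonoid α] {F : α → ℝ≥0∞}

theorem expect_conv_of_map_add (hF : ∀ a b, F (a + b) = F a * F b) (p q : PMF α) :
    expect (conv p q) F = expect p F * expect q F := by
  simp only [conv, expect_bind, expect_pure, hF, expect_const_mul, expect_mul_const]

theorem expect_iterConv_of_map_add (hF : ∀ a b, F (a + b) = F a * F b) (hF0 : F 0 = 1)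
    (p : PMF α) : ∀ m, expect (iterConv p m) F = expect p F ^ m
  | 0 => by rw [iterConv, expect_pure, hF0, pow_zero]
  | m + 1 => by
      rw [iterConv, expect_conv_of_map_add hF, expect_iterConv_of_map_add hF hF0 p m, pow_succ']

end PMF

section Survival

open scoped Classical

variable {d : ℕ} (step : Config d → PMF (Config d))

theorem ne_nil_of_mem_support_pathLaw {init : Config d} :
    ∀ {t} {l}, l ∈ (pathLaw step init t).support → l ≠ []
  | 0, l, hl => by
      rw [pathLaw, PMF.mem_support_pure_iff] at hl
      simp [hl]
  | t + 1, l, hl => by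
      obtain ⟨_, _, hl⟩ := (PMF.mem_support_bind_iff _ _ _).1 hl
      obtain ⟨c, _, rfl⟩ := (PMF.mem_support_map_iff _ _ _).1 hl
      exact List.cons_ne_nil _ _

theorem pathLaw_succ_eq_bind (init : Config d) : ∀ t, pathLaw step init (t + 1) =
    (step init).bind fun c => (pathLaw step c t).map (· ++ [init])
  | 0 => by simp [pathLaw, PMF.pure_bind, PMF.pure_map]; rfl
  | t + 1 => by
      rw [pathLaw, pathLaw_succ_eq_bind init t, PMF.bind_bind]
      refine congrArg _ (funext fun c => ?_)
      rw [pathLaw, PMF.map_bind, PMF.bind_map]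
      refine bind_congr_of_support fun l hl => ?_
      obtain ⟨c', l', rfl⟩ := List.exists_cons_of_ne_nil (ne_nil_of_mem_support_pathLaw step hl)
      simp [PMF.map_comp, Function.comp_def]

theorem survProb_eq_expect (init : Config d) (n t : ℕ) :
    survProb step init n t =
      expect (pathLaw step init t) fun l => if ∀ c ∈ l, avoids n c then 1 else 0 := by
  rw [survProb, PMF.toMeasure_apply_eq_tsum, expect]
  refine tsum_congr fun l => ?_
  simp [Set.indicator_apply]

theorem survProb_zero (init : Config d) (n : ℕ) :
    survProb step init n 0 = if avoids n init then 1 else 0 := by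
  simp [survProb_eq_expect, pathLaw, expect_pure]

theorem survProb_succ (init : Config d) (n t : ℕ) :
    survProb step init n (t + 1) =
      if avoids n init then expect (step init) (fun c => survProb step c n t) else 0 := by
  simp only [survProb_eq_expect, pathLaw_succ_eq_bind, expect_bind, expect_map,
    Function.comp_def, List.forall_mem_append, List.forall_mem_singleton]
  split_ifs with h
  · simp [h]
  · simp [h, expect]

theorem survProb_le_one (init : Config d) (n t : ℕ) : survProb step init n t ≤ 1 :=
  prob_le_one

theorem survProb_succ_le (n : ℕ) : ∀ t (init : Config d),
    survProb step init n (t + 1) ≤ survProb step init n t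
  | 0, init => by
      rw [survProb_succ, survProb_zero]
      split_ifs
      · exact expect_le_one _ fun c => survProb_le_one step c n 0
      · exact le_rfl
  | t + 1, init => by
      rw [survProb_succ step init n (t + 1), survProb_succ step init n t]
      split_ifs
      · exact expect_mono _ fun c => survProb_succ_le n t c
      · exact le_rfl

theorem one_sub_hitProb (init : Config d) (n : ℕ) :
    1 - hitProb step init n = ⨅ t, survProb step init n t :=
  ENNReal.sub_sub_cancel ENNReal.one_ne_top ((iInf_le _ 0).trans (survProb_le_one step init n 0))

theorem avoids_add_iff {n : ℕ} {η₁ η₂ : Config d} :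
    avoids n (η₁ + η₂) ↔ avoids n η₁ ∧ avoids n η₂ := by
  simp only [avoids, Finsupp.add_apply, Nat.add_eq_zero_iff, imp_and, forall_and]

theorem survProb_stepOf_add (child : Site d → PMF (Config d)) (n : ℕ) :
    ∀ t (η₁ η₂ : Config d), survProb (stepOf child) (η₁ + η₂) n t =
      survProb (stepOf child) η₁ n t * survProb (stepOf child) η₂ n t
  | 0, η₁, η₂ => by simp only [survProb_zero, avoids_add_iff, ite_zero_mul_ite_zero, mul_one]
  | t + 1, η₁, η₂ => by
      simp only [survProb_succ, avoids_add_iff, ite_zero_mul_ite_zero, stepOf_add,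
        expect_conv_of_map_add (F := fun c => survProb (stepOf child) c n t)
          (survProb_stepOf_add child n t)]

theorem survProb_stepOf_zero (child : Site d → PMF (Config d)) (n : ℕ) :
    ∀ t, survProb (stepOf child) 0 n t = 1
  | 0 => by simp [survProb_zero, avoids]
  | t + 1 => by
      rw [survProb_succ, stepOf_zero, expect_pure, survProb_stepOf_zero child n t]
      simp [avoids]

end Survival

section PeriodicWalk

open scoped Classical

variable {d : ℕ}

noncomputable def pgf (P : PMF ℕ) (s : ℝ≥0∞) : ℝ≥0∞ := ∑' i, s ^ i * P i

noncomputable def nbrAvg (f : Site d → ℝ≥0∞) (x : Site d) : ℝ≥0∞ :=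
  ((nbrs x).card : ℝ≥0∞)⁻¹ * ∑ y ∈ nbrs x, f y

noncomputable def periodicSurv (P : PMF ℕ) (n t : ℕ) (x : Site d) : ℝ≥0∞ :=
  survProb (periodicStep P) (Finsupp.single x 1) n t

theorem pgf_mono (P : PMF ℕ) : Monotone (pgf P) := fun _ _ h =>
  ENNReal.tsum_le_tsum fun i => by gcongr

theorem pgf_le_one (P : PMF ℕ) {s : ℝ≥0∞} (hs : s ≤ 1) : pgf P s ≤ 1 :=
  (pgf_mono P hs).trans_eq (by simp [pgf, PMF.tsum_coe])

theorem pgf_iInf (P : PMF ℕ) {u : ℕ → ℝ≥0∞} (hu : Antitone u) (hu0 : u 0 ≤ 1) :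
    pgf P (⨅ t, u t) = ⨅ t, pgf P (u t) := by
  have hterm (i : ℕ) : (⨅ t, u t) ^ i * P i = ⨅ t, u t ^ i * P i :=
    Monotone.map_ciInf_of_continuousAt (f := fun s : ℝ≥0∞ => s ^ i * P i)
      ((ENNReal.continuous_mul_const (PMF.apply_ne_top P i)).comp
        (ENNReal.continuous_pow i)).continuousAt
      fun a b hab => by dsimp only; gcongr
  have hfin : ∫⁻ i, u 0 ^ i * P i ∂Measure.count ≠ ∞ := by
    rw [lintegral_count]
    exact ne_top_of_le_ne_top ENNReal.one_ne_top (pgf_le_one P hu0)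
  have := lintegral_iInf (fun _ => measurable_of_countable _)
    (fun s t hst i => show u t ^ i * P i ≤ u s ^ i * P i by gcongr; exact hu hst) hfin
  simpa only [lintegral_count, pgf, hterm] using this

theorem avoids_single_iff {n : ℕ} {y : Site d} :
    avoids n (Finsupp.single y 1) ↔ ¬ onBdry n y := by
  refine ⟨fun h hy => by simpa using h y hy, fun hy z hz => ?_⟩
  rw [Finsupp.single_apply, if_neg]
  exact fun h => hy (h ▸ hz)

theorem nbrs_nonempty [NeZero d] (z : Site d) : (nbrs z).Nonempty :=
  ⟨_, Finset.mem_image.2 ⟨(0, 1), by simp, rfl⟩⟩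

theorem periodicSurv_zero (P : PMF ℕ) (n : ℕ) (x : Site d) :
    periodicSurv P n 0 x = if onBdry n x then 0 else 1 := by
  simp only [periodicSurv, survProb_zero, avoids_single_iff, ite_not]

theorem periodicSurv_succ [NeZero d] (P : PMF ℕ) (n t : ℕ) (x : Site d) :
    periodicSurv P n (t + 1) x =
      if onBdry n x then 0 else pgf P (nbrAvg (periodicSurv P n t) x) := by
  rw [periodicSurv, survProb_succ, periodicStep, stepOf_single]
  simp only [avoids_single_iff, ite_not]
  congr 1
  simp only [periodicChild, childLaw, expect_bind,
    expect_iterConv_of_map_add (F := fun c => survProb (stepOf (periodicChild P)) c n t)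
      (survProb_stepOf_add _ n t) (survProb_stepOf_zero _ n t),
    expect_map, expect_unifOn (nbrs_nonempty x)]
  exact tsum_congr fun i => mul_comm _ _

theorem periodicSurv_le_one (P : PMF ℕ) (n t : ℕ) (x : Site d) : periodicSurv P n t x ≤ 1 :=
  survProb_le_one _ _ n t

theorem periodicSurv_antitone (P : PMF ℕ) (n : ℕ) (x : Site d) :
    Antitone fun t => periodicSurv P n t x :=
  antitone_nat_of_succ_le fun t => survProb_succ_le _ n t _

theorem nbrAvg_mono {f g : Site d → ℝ≥0∞} {x : Site d} (h : ∀ y ∈ nbrs x, f y ≤ g y) :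
    nbrAvg f x ≤ nbrAvg g x :=
  mul_le_mul_right (Finset.sum_le_sum h) _

theorem nbrAvg_le_of_forall_le [NeZero d] {f : Site d → ℝ≥0∞} {x : Site d} {c : ℝ≥0∞}
    (h : ∀ y ∈ nbrs x, f y ≤ c) : nbrAvg f x ≤ c := by
  have hcard : ((nbrs x).card : ℝ≥0∞) ≠ 0 := by simpa using (nbrs_nonempty x).card_pos.ne'
  calc nbrAvg f x ≤ nbrAvg (fun _ => c) x := nbrAvg_mono h
    _ = c := by
      rw [nbrAvg, Finset.sum_const, nsmul_eq_mul, ← mul_assoc,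
        ENNReal.inv_mul_cancel hcard (ENNReal.natCast_ne_top _), one_mul]

theorem nbrAvg_apply_eq_nbrAvg_comp {R : Site d → Site d} (hR : Function.Injective R) {x : Site d}
    (hx : nbrs (R x) = (nbrs x).image R) (f : Site d → ℝ≥0∞) :
    nbrAvg f (R x) = nbrAvg (f ∘ R) x := by
  rw [nbrAvg, nbrAvg, hx, Finset.card_image_of_injective _ hR, Finset.sum_image hR.injOn]
  rfl

/-- `D` stands for the part of a half-plane on the centre's side of a mirror `R`: while `R x` is
off `∂Λ_n`, a walk can leave `D` only by stepping onto the mirror. -/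
theorem periodicSurv_reflect_le [NeZero d] (P : PMF ℕ) (n : ℕ) {R : Site d → Site d}
    (hR : Function.Injective R) (hnbrs : ∀ x, nbrs (R x) = (nbrs x).image R) {D : Set (Site d)}
    (hbdry : ∀ x ∈ D, onBdry n x → onBdry n (R x))
    (hD : ∀ x ∈ D, ¬ onBdry n (R x) → ∀ y ∈ nbrs x, y ∈ D ∨ R y = y) :
    ∀ t, ∀ x ∈ D, periodicSurv P n t (R x) ≤ periodicSurv P n t x
  | 0, x, hx => by
      rw [periodicSurv_zero, periodicSurv_zero]
      by_cases h : onBdry n x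
      · simp [h, hbdry x hx h]
      · rw [if_neg h]
        split_ifs <;> simp
  | t + 1, x, hx => by
      rw [periodicSurv_succ, periodicSurv_succ P n t x]
      by_cases hRx : onBdry n (R x)
      · simp [hRx]
      rw [if_neg hRx, if_neg fun h => hRx (hbdry x hx h), nbrAvg_apply_eq_nbrAvg_comp hR (hnbrs x)]
      refine pgf_mono P (nbrAvg_mono fun y hy => ?_)
      rcases hD x hx hRx y hy with hyD | hfix
      · exact periodicSurv_reflect_le P n hR hnbrs hbdry hD t y hyD
      · exact (congrArg _ hfix).le

end PeriodicWalk

section Plane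

theorem mem_nbrs_two_iff {x y : Site 2} : y ∈ nbrs x ↔ |y 0 - x 0| + |y 1 - x 1| = 1 := by
  simp [nbrs, Fin.exists_fin_two, funext_iff, Fin.forall_fin_two, Function.update_apply]
  grind

theorem onBdry_two_iff {n : ℕ} {x : Site 2} : onBdry n x ↔ max |x 0| |x 1| = n := by
  simp only [onBdry, Fin.forall_fin_two, Fin.exists_fin_two]
  grind

theorem nbrs_eq_image_of_isometry_two {R : Site 2 → Site 2} (hinv : Function.Involutive R)
    (hiso : ∀ x y, |R y 0 - R x 0| + |R y 1 - R x 1| = |y 0 - x 0| + |y 1 - x 1|) (x : Site 2) :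
    nbrs (R x) = (nbrs x).image R := by
  ext y
  simp only [Finset.mem_image, mem_nbrs_two_iff]
  constructor
  · intro hy
    exact ⟨R y, by rwa [← hiso x (R y), hinv y], hinv y⟩
  · rintro ⟨z, hz, rfl⟩
    rwa [hiso]

theorem periodicSurv_reflect_le_two (P : PMF ℕ) (n : ℕ) {R : Site 2 → Site 2}
    (hinv : Function.Involutive R)
    (hiso : ∀ x y, |R y 0 - R x 0| + |R y 1 - R x 1| = |y 0 - x 0| + |y 1 - x 1|)
    {D : Set (Site 2)} (hbdry : ∀ x ∈ D, onBdry n x → onBdry n (R x))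
    (hD : ∀ x ∈ D, ¬ onBdry n (R x) → ∀ y ∈ nbrs x, y ∈ D ∨ R y = y) (t : ℕ) {x : Site 2}
    (hx : x ∈ D) : periodicSurv P n t (R x) ≤ periodicSurv P n t x :=
  periodicSurv_reflect_le P n hinv.injective (nbrs_eq_image_of_isometry_two hinv hiso) hbdry hD t x hx

theorem periodicSurv_two_zero_le (P : PMF ℕ) {n : ℕ} (hn : 2 ≤ n) (t : ℕ) :
    periodicSurv P n t ![2, 0] ≤ periodicSurv P n t ![0, 0] := by
  convert periodicSurv_reflect_le_two P n (R := fun x => ![2 - x 0, x 1])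
    (D := {x | x 0 ≤ 0 ∧ max |2 - x 0| |x 1| ≤ n}) ?_ ?_ ?_ ?_ t (x := ![0, 0])
    (by norm_num; omega) using 2
  · simp
  all_goals simp only [Function.Involutive, funext_iff, Fin.forall_fin_two, Set.mem_ofPred_eq,
    onBdry_two_iff, mem_nbrs_two_iff, Matrix.cons_val_zero, Matrix.cons_val_one]
  all_goals grind

theorem periodicSurv_one_one_le (P : PMF ℕ) {n : ℕ} (hn : 2 ≤ n) (t : ℕ) :
    periodicSurv P n t ![1, 1] ≤ periodicSurv P n t ![0, 0] := by
  convert periodicSurv_reflect_le_two P n (R := fun x => ![1 - x 1, 1 - x 0])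
    (D := {x | x 0 + x 1 ≤ 0 ∧ max |1 - x 1| |1 - x 0| ≤ n}) ?_ ?_ ?_ ?_ t (x := ![0, 0])
    (by norm_num; omega) using 2
  · simp
  all_goals simp only [Function.Involutive, funext_iff, Fin.forall_fin_two, Set.mem_ofPred_eq,
    onBdry_two_iff, mem_nbrs_two_iff, Matrix.cons_val_zero, Matrix.cons_val_one]
  all_goals grind

theorem periodicSurv_one_neg_one_le (P : PMF ℕ) {n : ℕ} (hn : 2 ≤ n) (t : ℕ) :
    periodicSurv P n t ![1, -1] ≤ periodicSurv P n t ![0, 0] := by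
  convert periodicSurv_reflect_le_two P n (R := fun x => ![1 + x 1, x 0 - 1])
    (D := {x | x 0 - x 1 ≤ 0 ∧ max |1 + x 1| |x 0 - 1| ≤ n}) ?_ ?_ ?_ ?_ t (x := ![0, 0])
    (by norm_num; omega) using 2
  · simp
  all_goals simp only [Function.Involutive, funext_iff, Fin.forall_fin_two, Set.mem_ofPred_eq,
    onBdry_two_iff, mem_nbrs_two_iff, Matrix.cons_val_zero, Matrix.cons_val_one]
  all_goals grind

theorem periodicSurv_nbr_le_origin (P : PMF ℕ) {n : ℕ} (hn : 2 ≤ n) (t : ℕ) :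
    ∀ y ∈ nbrs (![1, 0] : Site 2), periodicSurv P n t y ≤ periodicSurv P n t ![0, 0] := by
  intro y hy
  have hy' : y = ![2, 0] ∨ y = ![0, 0] ∨ y = ![1, 1] ∨ y = ![1, -1] := by
    simp only [mem_nbrs_two_iff, Matrix.cons_val_zero, Matrix.cons_val_one] at hy
    simp only [funext_iff, Fin.forall_fin_two, Matrix.cons_val_zero, Matrix.cons_val_one]
    grind
  rcases hy' with rfl | rfl | rfl | rfl
  · exact periodicSurv_two_zero_le P hn t
  · exact le_rfl
  · exact periodicSurv_one_one_le P hn t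
  · exact periodicSurv_one_neg_one_le P hn t

end Plane

/-- For the periodic nearest-neighbors branching random walk on `ℤ²` with
offspring distribution `P`, letting `q_n(x) = 1 - p_n(x)`, for every `n ≥ 2` we have
`q_n(1,0) ≤ Σ_{i≥0} q_n(0,0)^i P_i`. -/
theorem periodic_noEscape_generating_inequality (P : PMF ℕ) (n : ℕ) (hn : 2 ≤ n) :
    1 - hitProb (periodicStep P) (Finsupp.single ![1, 0] 1) n
      ≤ ∑' i : ℕ, (1 - hitProb (periodicStep P) (Finsupp.single ![0, 0] 1) n) ^ i * P i := by
  rw [one_sub_hitProb, one_sub_hitProb]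
  change ⨅ t, periodicSurv P n t ![1, 0] ≤ pgf P (⨅ t, periodicSurv P n t ![0, 0])
  rw [pgf_iInf P (periodicSurv_antitone P n _) (periodicSurv_le_one P n 0 _)]
  have h10 : ¬ onBdry n (![1, 0] : Site 2) := by
    rw [onBdry_two_iff]
    norm_num
    omega
  refine le_iInf fun t => (iInf_le _ (t + 1)).trans ?_
  rw [periodicSurv_succ, if_neg h10]
  exact pgf_mono P (nbrAvg_le_of_forall_le (periodicSurv_nbr_le_origin P hn t))

end BRW
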